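/- arXiv:2602.16311 — 5 statements merged into one kernel-verified Lean document; each statement's English description precedes it below -/
import Mathlib

section
/- Let E be a finite ground set, X ⊆ ℝ^E a nonempty set, and 𝒞 a set of cost functions c : X → ℝ such that (X, 𝒞) is non-degenerate. If S ⊆ E is a controlling set for (X, 𝒞), then S is an identifying set for X. -/
/-- `S ⊆ E` is identifying for `X ⊆ ℝ^E`: any two distinct members of `X`
differ in some coordinate `e ∈ S`. -/
def Identifying {E : Type*} [Fintype E] (X : Set (E → ℝ)) (S : Set E) : Prop :=
  ∀ x ∈ X, ∀ y ∈ X, x ≠ y → ∃ e ∈ S, x e ≠ y e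

/-- `S ⊆ E` is controlling for `(X, C)`: for every cost function `c ∈ C` and every
`x* ∈ X` there is a vector `γ ∈ ℝ^S` (encoded as `γ : E → ℝ` vanishing outside `S`)
such that `x*` minimizes `x ↦ c x + ∑ e, γ e * x e` over `X`. -/
def Controlling {E : Type*} [Fintype E] (X : Set (E → ℝ))
    (C : Set ((E → ℝ) → ℝ)) (S : Set E) : Prop :=
  ∀ c ∈ C, ∀ xs ∈ X, ∃ γ : E → ℝ, (∀ e, e ∉ S → γ e = 0) ∧
    ∀ x ∈ X, c xs + ∑ e, γ e * xs e ≤ c x + ∑ e, γ e * x e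

/-- `(X, C)` is non-degenerate: distinct members of `X` are separated by some `c ∈ C`. -/
def NonDegenerate {E : Type*} [Fintype E] (X : Set (E → ℝ))
    (C : Set ((E → ℝ) → ℝ)) : Prop :=
  ∀ x ∈ X, ∀ y ∈ X, x ≠ y → ∃ c ∈ C, c x ≠ c y

/-- If `(X, C)` is non-degenerate and `S` is controlling for `(X, C)`,
then `S` is identifying for `X`. -/
theorem stmt0 {E : Type*} [Fintype E] (X : Set (E → ℝ)) (hX : X.Nonempty)
    (C : Set ((E → ℝ) → ℝ)) (hnd : NonDegenerate X C) (S : Set E)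
    (hS : Controlling X C S) :
    Identifying X S := by
  intro x hx y hy hxy
  by_contra h
  push_neg at h
  obtain ⟨c, hc, hcxy⟩ := hnd x hx y hy hxy
  have key : ∀ γ : E → ℝ, (∀ e, e ∉ S → γ e = 0) →
      (∑ e, γ e * x e) = (∑ e, γ e * y e) := by
    intro γ hγ
    refine Finset.sum_congr rfl fun e _ => ?_
    by_cases he : e ∈ S
    · rw [h e he]
    · rw [hγ e he]; ring
  obtain ⟨γ₁, hγ₁, hmin₁⟩ := hS c hc x hx
  obtain ⟨γ₂, hγ₂, hmin₂⟩ := hS c hc y hy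
  have h1 := hmin₁ y hy
  have h2 := hmin₂ x hx
  rw [key γ₁ hγ₁] at h1
  rw [key γ₂ hγ₂] at h2
  exact hcxy (le_antisymm (by linarith) (by linarith))
end

section
/- Let E be a finite ground set, let X ⊆ ℝ^E be a nonempty convex set, and let {x_0, …, x_k} ⊆ X be an affine basis of X (an inclusion-wise maximal affinely independent subset of X). For F ⊆ E set A(F) := {x_i − x_0 : i ∈ {1, …, k}} ∪ {χ_e : e ∈ F}, where χ_e denotes the e-th standard unit vector of ℝ^E. Then a set S ⊆ E is an identifying set for X if and only if the family of vectors A(E \ S) is linearly independent. -/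
/-! For convex `X`, every vector of `vectorSpan ℝ X` is a positive multiple of a difference
`p - q` of points of `X`: the cone over the symmetric convex set `X - X` is already a subspace.
So `S` is identifying exactly when `vectorSpan ℝ X` meets the coordinate subspace
`{v | ∀ e ∈ S, v e = 0}`, which is spanned by the `χ_e` with `e ∉ S`, only in `0`.
Maximality of the affine basis puts `X` inside the affine span of the `x i`, so
`vectorSpan ℝ X` is spanned by the linearly independent vectors `x i - x 0`; and the union of two
linearly independent families is independent iff their spans are disjoint. -/

open Submodule Set

section ConeHull

open Pointwise

variable {𝕜 M : Type*} [Field 𝕜] [LinearOrder 𝕜] [IsStrictOrderedRing 𝕜] [AddCommGroup M]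
  [Module 𝕜 M]

theorem ConvexCone.neg_mem_hull_of_convex {s : Set M} (hs : Convex 𝕜 s) (hneg : -s ⊆ s)
    {v : M} (hv : v ∈ hull 𝕜 s) : -v ∈ hull 𝕜 s := by
  obtain ⟨r, hr, w, hw, rfl⟩ := (mem_hull_of_convex hs).1 hv
  exact (mem_hull_of_convex hs).2 ⟨r, hr, -w, hneg (by simpa using hw), by simp⟩

theorem ConvexCone.hull_eq_toConvexCone_span {s : Set M} (hs : Convex 𝕜 s) (h0 : (0 : M) ∈ s)
    (hneg : -s ⊆ s) : hull 𝕜 s = (span 𝕜 s).toConvexCone := by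
  refine (hull_min (C := (span 𝕜 s).toConvexCone) subset_span).antisymm fun v hv => ?_
  induction hv using span_induction with
  | mem v hv => exact subset_hull hv
  | zero => exact subset_hull h0
  | add v w _ _ hv hw => exact add_mem hv hw
  | smul a v _ hv =>
    rcases lt_trichotomy a 0 with ha | rfl | ha
    · rw [← neg_smul_neg]
      exact (hull 𝕜 s).smul_mem (neg_pos.2 ha) (neg_mem_hull_of_convex hs hneg hv)
    · simpa using subset_hull h0
    · exact (hull 𝕜 s).smul_mem ha hv

theorem Convex.exists_pos_smul_eq_sub_of_mem_vectorSpan {X : Set M} (hX : Convex 𝕜 X)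
    (hne : X.Nonempty) {v : M} (hv : v ∈ vectorSpan 𝕜 X) :
    ∃ r : 𝕜, 0 < r ∧ ∃ p ∈ X, ∃ q ∈ X, v = r • (p - q) := by
  have hsub : Convex 𝕜 (X - X) := hX.sub hX
  obtain ⟨y, hy⟩ := hne
  have hvs : X -ᵥ X = X - X := rfl
  rw [vectorSpan_def, hvs, ← mem_toConvexCone,
    ← ConvexCone.hull_eq_toConvexCone_span hsub ⟨y, hy, y, hy, sub_self y⟩ (by rw [neg_sub])] at hv
  obtain ⟨r, hr, _, ⟨p, hp, q, hq, rfl⟩, rfl⟩ := (ConvexCone.mem_hull_of_convex hsub).1 hv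
  exact ⟨r, hr, p, hp, q, hq, rfl⟩

end ConeHull

theorem mem_span_range_single_one_compl_iff {R E : Type*} [Semiring R] [Fintype E] [DecidableEq E]
    {S : Set E} {v : E → R} :
    v ∈ span R (range fun e : ↥Sᶜ => Pi.single (e : E) (1 : R)) ↔ ∀ e ∈ S, v e = 0 := by
  have h : (range fun e : ↥Sᶜ => Pi.single (e : E) (1 : R)) = Pi.basisFun R E '' Sᶜ := by
    ext; simp
  rw [h, Module.Basis.mem_span_image]
  simp [Set.subset_def, not_imp_comm]

theorem identifying_iff_disjoint_vectorSpan {E : Type*} [Fintype E] [DecidableEq E]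
    {X : Set (E → ℝ)} (hX : Convex ℝ X) (hne : X.Nonempty) (S : Set E) :
    Identifying X S ↔
      Disjoint (vectorSpan ℝ X) (span ℝ (range fun e : ↥Sᶜ => Pi.single (e : E) (1 : ℝ))) := by
  simp only [Submodule.disjoint_def, mem_span_range_single_one_compl_iff]
  constructor
  · intro hid v hv hvS
    obtain ⟨r, hr, p, hp, q, hq, rfl⟩ := hX.exists_pos_smul_eq_sub_of_mem_vectorSpan hne hv
    by_contra hpq
    obtain ⟨e, he, hpqe⟩ := hid p hp q hq (by rintro rfl; simp at hpq)
    have := hvS e he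
    simp only [Pi.smul_apply, Pi.sub_apply, smul_eq_mul, mul_eq_zero, hr.ne', false_or] at this
    exact hpqe (sub_eq_zero.1 this)
  · intro hdisj p hp q hq hpq
    by_contra! h
    exact hpq (sub_eq_zero.1 (hdisj _ (vsub_mem_vectorSpan ℝ hp hq) fun e he => by simp [h e he]))

section AffineBasis

variable {k V : Type*} [DivisionRing k] [AddCommGroup V] [Module k V] {n : ℕ}

theorem AffineIndependent.fin_cons {P : Type*} [AddTorsor V P] {x : Fin n → P}
    (hx : AffineIndependent k x) {y : P} (hy : y ∉ affineSpan k (range x)) :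
    AffineIndependent k (Fin.cons y x : Fin (n + 1) → P) := by
  refine AffineIndependent.affineIndependent_of_notMem_span (k := k) (V := V) (i := 0) ?_ ?_
  · refine (affineIndependent_equiv (finSuccAboveEquiv 0)).1 ?_
    simpa [Function.comp_def, finSuccAboveEquiv_apply] using hx
  · have : (Fin.cons y x : Fin (n + 1) → P) '' {i | i ≠ 0} = range x := by
      rw [← compl_singleton_eq, ← Fin.range_succ, ← range_comp]
      rfl
    simpa [this] using hy

theorem subset_affineSpan_of_forall_not_affineIndependent_cons {P : Type*} [AddTorsor V P]
    {X : Set P} {x : Fin n → P} (hx : AffineIndependent k x)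
    (hmax : ∀ y ∈ X, y ∉ range x → ¬ AffineIndependent k (Fin.cons y x : Fin (n + 1) → P)) :
    X ⊆ affineSpan k (range x) := fun y hy => by
  by_contra hyx
  exact hmax y hy (fun hyr => hyx (subset_affineSpan k _ hyr)) (hx.fin_cons hyx)

theorem vectorSpan_eq_of_forall_not_affineIndependent_cons {P : Type*} [AddTorsor V P]
    {X : Set P} {x : Fin n → P} (hx : AffineIndependent k x) (hxX : range x ⊆ X)
    (hmax : ∀ y ∈ X, y ∉ range x → ¬ AffineIndependent k (Fin.cons y x : Fin (n + 1) → P)) :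
    vectorSpan k X = vectorSpan k (range x) := by
  rw [← direction_affineSpan, ← direction_affineSpan,
    (affineSpan_mono k hxX).antisymm' (affineSpan_le.2
      (subset_affineSpan_of_forall_not_affineIndependent_cons hx hmax))]

theorem vectorSpan_range_eq_span_range_succ_sub_zero (x : Fin (n + 1) → V) :
    vectorSpan k (range x) = span k (range fun i : Fin n => x i.succ - x 0) := by
  rw [vectorSpan_range_eq_span_range_vsub_right_ne k x 0,
    ← (finSuccAboveEquiv (0 : Fin (n + 1))).surjective.range_comp]
  simp [Function.comp_def, finSuccAboveEquiv_apply]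

theorem AffineIndependent.linearIndependent_succ_sub_zero {x : Fin (n + 1) → V}
    (hx : AffineIndependent k x) : LinearIndependent k fun i : Fin n => x i.succ - x 0 := by
  simpa [Function.comp_def, finSuccAboveEquiv_apply] using
    ((affineIndependent_iff_linearIndependent_vsub k x 0).1 hx).comp _
      (finSuccAboveEquiv 0).injective

end AffineBasis

theorem stmt2_general {E : Type*} [Fintype E] [DecidableEq E] (X : Set (E → ℝ))
    (hconv : Convex ℝ X)
    (k : ℕ) (x : Fin (k + 1) → E → ℝ) (hxX : ∀ i, x i ∈ X)
    (hindep : AffineIndependent ℝ x)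
    (hmax : ∀ y ∈ X, y ∉ Set.range x →
      ¬ AffineIndependent ℝ (Fin.cons y x : Fin (k + 2) → E → ℝ))
    (S : Set E) :
    Identifying X S ↔
      LinearIndependent ℝ
        (Sum.elim (fun i : Fin k => x i.succ - x 0)
          (fun e : ↥(Sᶜ) => Pi.single (e : E) (1 : ℝ))) := by
  have hsingle : LinearIndependent ℝ fun e : ↥Sᶜ => (Pi.single (e : E) (1 : ℝ) : E → ℝ) :=
    (Pi.linearIndependent_single_one E ℝ).comp Subtype.val Subtype.val_injective
  rw [identifying_iff_disjoint_vectorSpan hconv ⟨x 0, hxX 0⟩,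
    vectorSpan_eq_of_forall_not_affineIndependent_cons hindep (Set.range_subset_iff.2 hxX) hmax,
    vectorSpan_range_eq_span_range_succ_sub_zero, linearIndependent_sum]
  simp [hindep.linearIndependent_succ_sub_zero, hsingle]

/-- Let `X ⊆ ℝ^E` be a nonempty convex set and `x 0, …, x k` an affine basis of `X`
(an inclusion-wise maximal affinely independent subset of `X`).  Then `S ⊆ E` is
identifying for `X` iff the family `A(E \ S)`, consisting of the vectors
`x i - x 0` (for `i = 1, …, k`) together with the standard unit vectors `χ_e`
for `e ∈ E \ S`, is linearly independent. -/
theorem stmt2 {E : Type*} [Fintype E] [DecidableEq E] (X : Set (E → ℝ))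
    (hX : X.Nonempty) (hconv : Convex ℝ X)
    (k : ℕ) (x : Fin (k + 1) → E → ℝ) (hxX : ∀ i, x i ∈ X)
    (hindep : AffineIndependent ℝ x)
    (hmax : ∀ y ∈ X, y ∉ Set.range x →
      ¬ AffineIndependent ℝ (Fin.cons y x : Fin (k + 2) → E → ℝ))
    (S : Set E) :
    Identifying X S ↔
      LinearIndependent ℝ
        (Sum.elim (fun i : Fin k => x i.succ - x 0)
          (fun e : ↥(Sᶜ) => Pi.single (e : E) (1 : ℝ))) :=
  stmt2_general X hconv k x hxX hindep hmax S
end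

section
/- Let E be a finite ground set, let X ⊆ {0,1}^E be nonempty, and let 𝒞 be a set of cost functions c : X → ℝ such that (X, 𝒞) is non-degenerate. Then a set S ⊆ E is an identifying set for X if and only if S is a controlling set for (X, 𝒞). -/
/-- For a nonempty set `X ⊆ {0,1}^E` of binary vectors and a non-degenerate pair `(X, C)`,
a set `S ⊆ E` is identifying for `X` if and only if it is controlling for `(X, C)`. -/
theorem stmt6 {E : Type*} [Fintype E] (X : Set (E → ℝ)) (hX : X.Nonempty)
    (h01 : ∀ x ∈ X, ∀ e, x e = 0 ∨ x e = 1) (C : Set ((E → ℝ) → ℝ))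
    (hnd : NonDegenerate X C) (S : Set E) :
    Identifying X S ↔ Controlling X C S := by
    classical
  constructor
  · intro hid c hc xs hxs
    -- X is finite
    have hfin : X.Finite := by
      have : X ⊆ Set.pi Set.univ (fun _ : E => ({0, 1} : Set ℝ)) := by
        intro x hx
        intro e _
        rcases h01 x hx e with h | h <;> simp [h]
      exact (Set.Finite.pi (fun _ => (Set.finite_singleton (1:ℝ)).insert 0)).subset this
    have hne : hfin.toFinset.Nonempty := hfin.toFinset_nonempty.mpr hX
    set M : ℝ := max 0 (hfin.toFinset.sup' hne (fun x => c xs - c x)) with hMdef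
    have hM0 : 0 ≤ M := le_max_left _ _
    have hMle : ∀ x ∈ X, c xs - c x ≤ M := by
      intro x hx
      exact le_trans (Finset.le_sup' (fun x => c xs - c x) (hfin.mem_toFinset.mpr hx))
        (le_max_right _ _)
    refine ⟨fun e => if e ∈ S then M * (1 - 2 * xs e) else 0, fun e he => by simp [he], ?_⟩
    intro x hx
    have hterm : ∀ e, 0 ≤ (if e ∈ S then M * (1 - 2 * xs e) else 0) * x e -
        (if e ∈ S then M * (1 - 2 * xs e) else 0) * xs e := by
      intro e
      by_cases hS : e ∈ S
      · simp only [if_pos hS]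
        rcases h01 x hx e with h1 | h1 <;> rcases h01 xs hxs e with h2 | h2 <;>
          rw [h1, h2] <;> nlinarith [hM0]
      · simp [hS]
    by_cases hxx : x = xs
    · subst hxx; exact le_refl _
    · obtain ⟨e0, he0S, he0⟩ := hid x hx xs hxs hxx
      have hbig : M ≤ (if e0 ∈ S then M * (1 - 2 * xs e0) else 0) * x e0 -
          (if e0 ∈ S then M * (1 - 2 * xs e0) else 0) * xs e0 := by
        simp only [if_pos he0S]
        rcases h01 x hx e0 with h1 | h1 <;> rcases h01 xs hxs e0 with h2 | h2
        · exact absurd (h1.trans h2.symm) he0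
        · rw [h1, h2]; nlinarith [hM0]
        · rw [h1, h2]; nlinarith [hM0]
        · exact absurd (h1.trans h2.symm) he0
      have hsum : M ≤ ∑ e, ((if e ∈ S then M * (1 - 2 * xs e) else 0) * x e -
          (if e ∈ S then M * (1 - 2 * xs e) else 0) * xs e) :=
        le_trans hbig (Finset.single_le_sum (fun e _ => hterm e) (Finset.mem_univ e0))
      rw [Finset.sum_sub_distrib] at hsum
      have := hMle x hx
      linarith
  · intro hctl x hx y hy hne
    by_contra hcon
    push_neg at hcon
    obtain ⟨c, hc, hcne⟩ := hnd x hx y hy hne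
    obtain ⟨γ1, hγ1, hmin1⟩ := hctl c hc x hx
    obtain ⟨γ2, hγ2, hmin2⟩ := hctl c hc y hy
    have key : ∀ γ : E → ℝ, (∀ e, e ∉ S → γ e = 0) →
        ∑ e, γ e * x e = ∑ e, γ e * y e := by
      intro γ hγ
      refine Finset.sum_congr rfl fun e _ => ?_
      by_cases hS : e ∈ S
      · rw [hcon e hS]
      · rw [hγ e hS]; ring
    have h1 := hmin1 y hy
    have h2 := hmin2 x hx
    rw [key γ1 hγ1] at h1
    rw [key γ2 hγ2] at h2
    exact hcne (le_antisymm (by linarith) (by linarith))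
end

section
/- Let M = (E, 𝓘) be a matroid on a finite ground set E, let X ⊆ {0,1}^E be the set of incidence vectors of the bases of M, and let 𝒞 be the class of all non-decreasing cost functions on X. Then for S ⊆ E the following are equivalent: (i) S is a controlling set for (X, 𝒞); (ii) S is an identifying set for X; (iii) |S ∩ C| ≥ |C| − 1 for every circuit C of M. -/
/-- The set of incidence vectors of bases of the matroid `M`. -/
def basesX {E : Type*} [Fintype E] (M : Matroid E) : Set (E → ℝ) :=
  {x | ∃ B : Set E, M.IsBase B ∧ x = B.indicator fun _ => (1 : ℝ)}

/-- A circuit of the matroid `M`: a minimal dependent set (here with ground set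
`M.E = univ`, so a set that is not independent while all its proper subsets are). -/
def IsCircuitOf {E : Type*} (M : Matroid E) (C : Set E) : Prop :=
  ¬ M.Indep C ∧ ∀ D : Set E, D ⊂ C → M.Indep D

/-!
For a finite set `X ⊆ {0,1}^E`, identifying implies controlling for every cost function: penalise
each coordinate of `S` by `N (1 - 2 x*ₑ)`, which raises the cost of every `x ≠ x*` by `N` times
the number of coordinates of `S` where it differs from `x*`; for `N` large this beats any cost
difference. Conversely, if two members `x ≠ y` agree on `S`, no `γ` can separate them, so the
monotone cost `[x ≤ ·]`, under which `y` is strictly cheaper since bases form an antichain, cannot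
be made minimal at `x`.

For bases, identifying means `B ↦ B ∩ S` is injective. If a circuit `C` has two elements
`e ≠ f` outside `S`, then extending `C \ {f}` to a base `B` and exchanging `e` for `f` gives two
bases with the same trace on `S`. If `B ≠ B'` have the same trace, pick `e ∈ B \ B'`: the
fundamental circuit of `e` in `B'` meets the complement of `S` only in `e`, hence lies in `B`.
-/

open Set

section Controlling

variable {E : Type*} [Fintype E] {X : Set (E → ℝ)} {S : Set E}

theorem Controlling.identifying (hX : IsAntichain (· ≤ ·) X)
    (h : Controlling X {c | Monotone c} S) : Identifying X S := by
  classical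
  intro x hx y hy hxy
  by_contra! hagree
  let c : (E → ℝ) → ℝ := fun z => if x ≤ z then 1 else 0
  have hc : Monotone c := fun z z' hzz' => by
    by_cases hz : x ≤ z
    · simp [c, hz, hz.trans hzz']
    · simp only [c, hz, if_false]
      split_ifs <;> norm_num
  obtain ⟨γ, hγ, hmin⟩ := h c hc x hx
  have hγxy : ∑ e, γ e * x e = ∑ e, γ e * y e := Finset.sum_congr rfl fun e _ => by
    by_cases he : e ∈ S
    · rw [hagree e he]
    · simp [hγ e he]
  have hcost := hmin y hy
  rw [hγxy, add_le_add_iff_right] at hcost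
  have hxy' : ¬ x ≤ y := hX hx hy hxy
  norm_num [c, hxy'] at hcost

theorem one_sub_two_mul_mul_sub_of_zero_or_one {a b : ℝ} (ha : a = 0 ∨ a = 1)
    (hb : b = 0 ∨ b = 1) : (1 - 2 * a) * (b - a) = if a = b then 0 else 1 := by
  rcases ha with rfl | rfl <;> rcases hb with rfl | rfl <;> norm_num

theorem Identifying.controlling (hfin : X.Finite) (h01 : ∀ x ∈ X, ∀ e, x e = 0 ∨ x e = 1)
    (h : Identifying X S) (C : Set ((E → ℝ) → ℝ)) : Controlling X C S := by
  classical
  intro c _ xs hxs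
  obtain ⟨N, hN⟩ := (hfin.image fun x => c xs - c x).bddAbove
  have hN0 : 0 ≤ N := by simpa using hN (mem_image_of_mem _ hxs)
  set γ : E → ℝ := fun e => if e ∈ S then (N + 1) * (1 - 2 * xs e) else 0
  refine ⟨γ, fun e he => if_neg he, fun x hx => ?_⟩
  rcases eq_or_ne x xs with rfl | hne
  · rfl
  have hgain : ∀ e, γ e * (x e - xs e) = if e ∈ S ∧ xs e ≠ x e then N + 1 else 0 := fun e => by
    by_cases he : e ∈ S
    · simp only [γ, he, if_true, true_and, mul_assoc,
        one_sub_two_mul_mul_sub_of_zero_or_one (h01 xs hxs e) (h01 x hx e)]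
      split_ifs <;> simp_all
    · simp [γ, he]
  obtain ⟨e₀, he₀S, he₀⟩ := h x hx xs hxs hne
  have hsum : N + 1 ≤ ∑ e, γ e * x e - ∑ e, γ e * xs e := by
    rw [← Finset.sum_sub_distrib]
    simp_rw [← mul_sub, hgain]
    calc N + 1 = if e₀ ∈ S ∧ xs e₀ ≠ x e₀ then N + 1 else 0 := by simp [he₀S, Ne.symm he₀]
      _ ≤ _ := Finset.single_le_sum (f := fun e => if e ∈ S ∧ xs e ≠ x e then N + 1 else 0)
          (fun e _ => by split_ifs <;> linarith) (Finset.mem_univ e₀)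
  have hcost : c xs - c x ≤ N := hN (mem_image_of_mem _ hx)
  linarith

end Controlling

namespace Matroid

variable {α : Type*} {M : Matroid α}

theorem IsCircuit.exists_isBase_exchange {C : Set α} (hC : M.IsCircuit C) {e f : α}
    (he : e ∈ C) (hf : f ∈ C) (hef : e ≠ f) :
    ∃ B, M.IsBase B ∧ f ∉ B ∧ M.IsBase (insert f B \ {e}) := by
  obtain ⟨B, hB, hCB⟩ := (hC.sdiff_singleton_indep hf).exists_isBase_superset
  have hCfB : C ⊆ insert f B := sdiff_singleton_subset_iff.1 hCB
  have hfB : f ∉ B := fun hfB => hC.not_indep (hB.indep.subset (insert_eq_of_mem hfB ▸ hCfB))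
  have hfcl : f ∈ M.closure B := hB.closure_eq ▸ hC.subset_ground hf
  have hC_eq : C = M.fundCircuit f B := hC.eq_fundCircuit_of_subset hB.indep hCfB
  have hindep : M.Indep (insert f B \ {e}) :=
    (hB.indep.mem_fundCircuit_iff hfcl hfB).1 (hC_eq ▸ he)
  exact ⟨B, hB, hfB, hB.exchange_isBase_of_indep' (hCB ⟨he, hef⟩) hfB hindep⟩

theorem injOn_inter_setOf_isBase_iff {S : Set α} :
    InjOn (· ∩ S) {B | M.IsBase B} ↔ ∀ C, M.IsCircuit C → (C \ S).Subsingleton := by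
  constructor
  · intro hinj C hC e ⟨heC, heS⟩ f ⟨hfC, hfS⟩
    by_contra hef
    obtain ⟨B, hB, hfB, hB'⟩ := hC.exists_isBase_exchange heC hfC hef
    have htrace : B ∩ S = (insert f B \ {e}) ∩ S := by
      ext x
      by_cases hxe : x = e <;> by_cases hxf : x = f <;> simp_all
    exact hfB (hinj hB hB' htrace ▸ mem_sdiff_of_mem (mem_insert f B) (Ne.symm hef))
  · intro hcirc B hB B' hB' htrace
    by_contra hne
    obtain ⟨e, heB, heB'⟩ : (B \ B').Nonempty :=
      nonempty_iff_ne_empty.2 fun h => hne (hB.eq_of_subset_isBase hB' (sdiff_eq_empty.1 h))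
    have htrace' : B ∩ S = B' ∩ S := htrace
    have heS : e ∉ S := fun heS => heB' (htrace' ▸ mem_inter heB heS : e ∈ B' ∩ S).1
    have hC := hB'.fundCircuit_isCircuit (hB.subset_ground heB) heB'
    have hCB : M.fundCircuit e B' ⊆ B := by
      intro g hg
      obtain rfl | hge := eq_or_ne g e
      · exact heB
      have hgB' : g ∈ B' :=
        (mem_insert_iff.1 (M.fundCircuit_subset_insert e B' hg)).resolve_left hge
      have hgS : g ∈ S := by_contra fun hgS =>
        hge (hcirc _ hC ⟨hg, hgS⟩ ⟨mem_fundCircuit M e B', heS⟩)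
      exact (htrace'.symm ▸ mem_inter hgB' hgS : g ∈ B ∩ S).1
    exact hC.not_indep (hB.indep.subset hCB)

end Matroid

theorem isCircuitOf_iff_isCircuit {E : Type*} {M : Matroid E} (hME : M.E = univ) {C : Set E} :
    IsCircuitOf M C ↔ M.IsCircuit C := by
  rw [Matroid.isCircuit_iff_forall_ssubset, IsCircuitOf,
    Matroid.not_indep_iff (hME ▸ subset_univ C)]

theorem indicator_one_eqOn_iff_inter_eq {E : Type*} {B B' S : Set E} :
    (∀ e ∈ S, B.indicator (fun _ => (1 : ℝ)) e = B'.indicator (fun _ => (1 : ℝ)) e) ↔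
      B ∩ S = B' ∩ S := by
  have hpoint : ∀ e, B.indicator (fun _ => (1 : ℝ)) e = B'.indicator (fun _ => (1 : ℝ)) e ↔
      (e ∈ B ↔ e ∈ B') := fun e => by
    by_cases he : e ∈ B <;> by_cases he' : e ∈ B' <;> simp [he, he']
  simp only [hpoint, Set.ext_iff, mem_inter_iff]
  exact forall_congr' fun e => by tauto

section basesX

variable {E : Type*} [Fintype E] (M : Matroid E)

theorem finite_basesX : (basesX M).Finite :=
  (finite_range fun B : Set E => B.indicator fun _ => (1 : ℝ)).subset
    (by rintro _ ⟨B, -, rfl⟩; exact ⟨B, rfl⟩)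

theorem basesX_apply_eq_zero_or_one : ∀ x ∈ basesX M, ∀ e, x e = 0 ∨ x e = 1 := by
  rintro _ ⟨B, -, rfl⟩ e
  exact indicator_eq_zero_or_self _ _ _

theorem isAntichain_basesX : IsAntichain (· ≤ ·) (basesX M) := by
  rintro _ ⟨B, hB, rfl⟩ _ ⟨B', hB', rfl⟩ hne hle
  have hBB' : B ⊆ B' := fun e he => by
    by_contra he'
    have := hle e
    norm_num [he, he'] at this
  exact hne (by rw [hB.eq_of_subset_isBase hB' hBB'])

theorem identifying_basesX_iff {S : Set E} :
    Identifying (basesX M) S ↔ InjOn (· ∩ S) {B | M.IsBase B} := by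
  constructor
  · intro h B hB B' hB' htrace
    by_contra hne
    obtain ⟨e, heS, he⟩ :=
      h _ ⟨B, hB, rfl⟩ _ ⟨B', hB', rfl⟩ fun heq => hne (indicator_one_inj ℝ heq)
    exact he (indicator_one_eqOn_iff_inter_eq.2 htrace e heS)
  · rintro h _ ⟨B, hB, rfl⟩ _ ⟨B', hB', rfl⟩ hne
    by_contra! hagree
    exact hne (by rw [h hB hB' (indicator_one_eqOn_iff_inter_eq.1 hagree)])

end basesX

theorem ncard_le_ncard_inter_add_one_iff {E : Type*} {C : Set E} (hC : C.Finite) (S : Set E) :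
    C.ncard ≤ (S ∩ C).ncard + 1 ↔ (C \ S).Subsingleton := by
  have hsplit := ncard_inter_add_ncard_sdiff_eq_ncard C S hC
  rw [inter_comm, Set.Subsingleton, ← ncard_le_one hC.sdiff]
  omega

/-- Let `M` be a matroid on the finite ground set `E`, let `X ⊆ {0,1}^E` be the set of
incidence vectors of bases of `M`, and let `C` be the class of all non-decreasing cost
functions.  Then for `S ⊆ E`: `S` is controlling for `(X, C)` iff `S` is identifying
for `X` iff `|S ∩ C'| ≥ |C'| − 1` for every circuit `C'` of `M`. -/
theorem stmt15 {E : Type*} [Fintype E] (M : Matroid E) (hME : M.E = Set.univ)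
    (S : Set E) :
    (Controlling (basesX M) {c | Monotone c} S ↔ Identifying (basesX M) S) ∧
    (Identifying (basesX M) S ↔
      ∀ C : Set E, IsCircuitOf M C → C.ncard ≤ (S ∩ C).ncard + 1) := by
  refine ⟨⟨fun h => h.identifying (isAntichain_basesX M),
    fun h => h.controlling (finite_basesX M) (basesX_apply_eq_zero_or_one M) _⟩, ?_⟩
  rw [identifying_basesX_iff, Matroid.injOn_inter_setOf_isBase_iff]
  refine forall_congr' fun C => ?_
  rw [isCircuitOf_iff_isCircuit hME, ncard_le_ncard_inter_add_one_iff C.toFinite]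
end

section
/- Let M = (E, 𝓘) be a matroid on a finite ground set E. Then for any two distinct bases B, B' of M, the symmetric difference B Δ B' intersects a set S ⊆ E whenever |S ∩ C| ≥ |C| − 1 holds for every circuit C of M; conversely, if |S ∩ C| ≤ |C| − 2 for some circuit C of M, then there exist two distinct bases B, B' of M with (B Δ B') ∩ S = ∅. -/
open Set
open scoped symmDiff

namespace Matroid

variable {α : Type*} {M : Matroid α} {B B' C : Set α} {x y : α}

lemma isCircuitOf_iff_isCircuit (hME : M.E = univ) : IsCircuitOf M C ↔ M.IsCircuit C := by
  rw [isCircuit_iff_forall_ssubset, dep_iff, hME]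
  exact ⟨fun h ↦ ⟨⟨h.1, subset_univ C⟩, h.2⟩, fun h ↦ ⟨h.1.1, h.2⟩⟩

/-- The fundamental circuit of `x ∈ B \ B'` with respect to `B'` is not contained in `B`,
so it meets `B' \ B` as well. -/
lemma IsBase.exists_isCircuit_inter_symmDiff_nontrivial (hB : M.IsBase B) (hB' : M.IsBase B')
    (hne : B ≠ B') : ∃ C, M.IsCircuit C ∧ (C ∩ B ∆ B').Nontrivial := by
  obtain ⟨x, hxB, hxB'⟩ := not_subset.1 fun h ↦ hne (hB.eq_of_subset_isBase hB' h)
  have hC := hB'.fundCircuit_isCircuit (hB.subset_ground hxB) hxB'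
  obtain ⟨y, hyC, hyB⟩ := not_subset.1 fun h ↦ hC.not_indep (hB.indep.subset h)
  have hyB' : y ∈ B' := ((M.fundCircuit_subset_insert x B') hyC).resolve_left
    (by rintro rfl; exact hyB hxB)
  exact ⟨_, hC, x, ⟨M.mem_fundCircuit x B', .inl ⟨hxB, hxB'⟩⟩, y, ⟨hyC, .inr ⟨hyB', hyB⟩⟩,
    by rintro rfl; exact hyB hxB⟩

/-- Extend `C \ {x}` to a base `B`; then `C` is the fundamental circuit of `x` in `B`,
and exchanging `y` for `x` gives another base. -/
lemma IsCircuit.exists_isBase_symmDiff_eq_pair (hC : M.IsCircuit C) (hx : x ∈ C) (hy : y ∈ C)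
    (hxy : x ≠ y) : ∃ B B', M.IsBase B ∧ M.IsBase B' ∧ B ∆ B' = {x, y} := by
  obtain ⟨B, hB, hCB⟩ := (hC.ssubset_indep (sdiff_singleton_ssubset.2 hx)).exists_isBase_superset
  have hCB' : C ⊆ insert x B := sdiff_subset_iff.1 hCB
  have hxB : x ∉ B := fun hxB ↦
    hC.not_indep (hB.indep.subset (by rwa [insert_eq_of_mem hxB] at hCB'))
  have hyB : y ∈ B := hCB ⟨hy, hxy.symm⟩
  have hxcl : x ∈ M.closure B := by rw [hB.closure_eq]; exact hC.subset_ground hx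
  have hexch : M.Indep (insert x B \ {y}) := by
    rw [← hB.indep.mem_fundCircuit_iff hxcl hxB, ← hC.eq_fundCircuit_of_subset hB.indep hCB']
    exact hy
  refine ⟨B, _, hB, hB.exchange_isBase_of_indep' hyB hxB hexch, ?_⟩
  ext z
  grind

theorem exists_isBase_ne_disjoint_symmDiff_iff (M : Matroid α) (S : Set α) :
    (∃ B B', M.IsBase B ∧ M.IsBase B' ∧ B ≠ B' ∧ Disjoint (B ∆ B') S) ↔
      ∃ C, M.IsCircuit C ∧ (C \ S).Nontrivial := by
  constructor
  · rintro ⟨B, B', hB, hB', hne, hdisj⟩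
    obtain ⟨C, hC, hCBB'⟩ := hB.exists_isCircuit_inter_symmDiff_nontrivial hB' hne
    exact ⟨C, hC, hCBB'.mono fun z ⟨hzC, hz⟩ ↦ ⟨hzC, hdisj.notMem_of_mem_left hz⟩⟩
  · rintro ⟨C, hC, x, ⟨hxC, hxS⟩, y, ⟨hyC, hyS⟩, hxy⟩
    obtain ⟨B, B', hB, hB', hBB'⟩ := hC.exists_isBase_symmDiff_eq_pair hxC hyC hxy
    refine ⟨B, B', hB, hB', fun h ↦ ?_, ?_⟩
    · rw [h, symmDiff_self] at hBB'
      exact (insert_nonempty x {y}).ne_empty hBB'.symm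
    · rw [hBB', disjoint_insert_left, disjoint_singleton_left]
      exact ⟨hxS, hyS⟩

end Matroid

lemma Set.ncard_inter_add_two_le_iff {α : Type*} {C : Set α} (S : Set α) (hC : C.Finite) :
    (S ∩ C).ncard + 2 ≤ C.ncard ↔ (C \ S).Nontrivial := by
  have : Finite ↑(C \ S) := hC.sdiff.to_subtype
  rw [← one_lt_ncard_iff_nontrivial, ← ncard_inter_add_ncard_sdiff_eq_ncard C S hC, inter_comm]
  omega

/-- Let `M` be a matroid on a finite ground set `E` and `S ⊆ E`.
(1) If `|S ∩ C| ≥ |C| − 1` for every circuit `C` of `M`, then for any two distinct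
bases `B, B'` the symmetric difference `B Δ B'` intersects `S`.
(2) Conversely, if `|S ∩ C| ≤ |C| − 2` for some circuit `C` of `M`, then there are two
distinct bases `B, B'` with `(B Δ B') ∩ S = ∅`. -/
theorem stmt16 {E : Type*} [Fintype E] (M : Matroid E) (hME : M.E = Set.univ)
    (S : Set E) :
    ((∀ C : Set E, IsCircuitOf M C → C.ncard ≤ (S ∩ C).ncard + 1) →
      ∀ B B' : Set E, M.IsBase B → M.IsBase B' → B ≠ B' →
        (((B \ B') ∪ (B' \ B)) ∩ S).Nonempty) ∧
    ((∃ C : Set E, IsCircuitOf M C ∧ (S ∩ C).ncard + 2 ≤ C.ncard) →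
      ∃ B B' : Set E, M.IsBase B ∧ M.IsBase B' ∧ B ≠ B' ∧
        ((B \ B') ∪ (B' \ B)) ∩ S = ∅) := by
  constructor
  · intro hS B B' hB hB' hne
    by_contra hempty
    obtain ⟨C, hC, hCS⟩ := (M.exists_isBase_ne_disjoint_symmDiff_iff S).1
      ⟨B, B', hB, hB', hne, disjoint_iff_inter_eq_empty.2 (not_nonempty_iff_eq_empty.1 hempty)⟩
    have hcard := (Set.ncard_inter_add_two_le_iff S C.toFinite).2 hCS
    have := hS C ((Matroid.isCircuitOf_iff_isCircuit hME).2 hC)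
    omega
  · rintro ⟨C, hC, hcard⟩
    obtain ⟨B, B', hB, hB', hne, hdisj⟩ := (M.exists_isBase_ne_disjoint_symmDiff_iff S).2
      ⟨C, (Matroid.isCircuitOf_iff_isCircuit hME).1 hC,
        (Set.ncard_inter_add_two_le_iff S C.toFinite).1 hcard⟩
    exact ⟨B, B', hB, hB', hne, hdisj.inter_eq⟩
end
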